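/- For every real λ, every integer n ≥ 2 and all integers 1 ≤ q < p ≤ n, it holds that 2·D̃_{pq} − D̃_{pp} − D̃_{qq} = 2·sinh(((q−p)/2)λ)·G, where D̃_{ij} := cosh((min(i,j) − 1/2)λ)·cosh((n − max(i,j) + 1/2)λ) and G := cosh((q − 1/2)λ)·sinh((n − (p+q−1)/2)λ) + cosh((n − p + 1/2)λ)·sinh(((p+q−1)/2)λ). -/

import Mathlib

open Real Matrix Finset

noncomputable section

/-- Real inverse hyperbolic cosine. -/
def arcosh (x : ℝ) : ℝ := Real.log (x + Real.sqrt (x ^ 2 - 1))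

/-- `D̃ᵢⱼ = cosh((min(i,j) − 1/2)λ)·cosh((n − max(i,j) + 1/2)λ)`. -/
def Dtil (n : ℕ) (l : ℝ) (i j : ℕ) : ℝ :=
  Real.cosh (((min i j : ℕ) - (1 : ℝ) / 2) * l) *
    Real.cosh (((n : ℝ) - (max i j : ℕ) + 1 / 2) * l)

/-- The quantity `G`. -/
def Gq (n p q : ℕ) (l : ℝ) : ℝ :=
  Real.cosh (((q : ℝ) - 1 / 2) * l) *
      Real.sinh (((n : ℝ) - ((p : ℝ) + (q : ℝ) - 1) / 2) * l) +
    Real.cosh (((n : ℝ) - (p : ℝ) + 1 / 2) * l) *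
      Real.sinh ((((p : ℝ) + (q : ℝ) - 1) / 2) * l)

/-!
Put `u = ((p+q-1)/2)λ`, `v = (n - (p+q-1)/2)λ` and `s = ((q-p)/2)λ`. Then
`D̃ₚq = cosh(u+s) cosh(v+s)`, `D̃ₚₚ = cosh(u-s) cosh(v+s)`, `D̃qq = cosh(u+s) cosh(v-s)` and
`G = cosh(u+s) sinh v + cosh(v+s) sinh u`, so the claim follows from
`cosh(x+s) - cosh(x-s) = 2 sinh x sinh s`, applied once with `x = u` and once with `x = v`.
-/

lemma Real.cosh_add_sub_cosh_sub (x s : ℝ) :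
    cosh (x + s) - cosh (x - s) = 2 * sinh x * sinh s := by
  rw [cosh_add, cosh_sub]
  ring

lemma two_cosh_mul_cosh_sub_sub (u v s : ℝ) :
    2 * (cosh (u + s) * cosh (v + s)) - cosh (u - s) * cosh (v + s) - cosh (u + s) * cosh (v - s) =
      2 * sinh s * (cosh (u + s) * sinh v + cosh (v + s) * sinh u) := by
  calc _ = cosh (v + s) * (cosh (u + s) - cosh (u - s))
        + cosh (u + s) * (cosh (v + s) - cosh (v - s)) := by ring
    _ = _ := by rw [Real.cosh_add_sub_cosh_sub, Real.cosh_add_sub_cosh_sub]; ring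

lemma Dtil_of_le {i j : ℕ} (h : j ≤ i) (n : ℕ) (l : ℝ) :
    Dtil n l i j = cosh (((j : ℝ) - 1 / 2) * l) * cosh (((n : ℝ) - i + 1 / 2) * l) := by
  rw [Dtil, min_eq_right h, max_eq_left h]

theorem Dtil_combination_eq_general (l : ℝ) (n p q : ℕ) (hqp : q < p) :
    2 * Dtil n l p q - Dtil n l p p - Dtil n l q q =
      2 * Real.sinh ((((q : ℝ) - (p : ℝ)) / 2) * l) * Gq n p q l := by
  set u := (((p : ℝ) + q - 1) / 2) * l
  set v := ((n : ℝ) - ((p : ℝ) + q - 1) / 2) * l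
  set s := (((q : ℝ) - p) / 2) * l
  have hq : ((q : ℝ) - 1 / 2) * l = u + s := by ring
  have hp : ((p : ℝ) - 1 / 2) * l = u - s := by ring
  have hnp : ((n : ℝ) - p + 1 / 2) * l = v + s := by ring
  have hnq : ((n : ℝ) - q + 1 / 2) * l = v - s := by ring
  rw [Dtil_of_le hqp.le, Dtil_of_le le_rfl, Dtil_of_le le_rfl, Gq, hq, hp, hnp, hnq]
  exact two_cosh_mul_cosh_sub_sub u v s

/-- `2·D̃ₚq − D̃ₚₚ − D̃qq = 2·sinh(((q−p)/2)λ)·G`. -/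
theorem Dtil_combination_eq (l : ℝ) (n p q : ℕ) (hn : 2 ≤ n)
    (hq : 1 ≤ q) (hqp : q < p) (hpn : p ≤ n) :
    2 * Dtil n l p q - Dtil n l p p - Dtil n l q q =
      2 * Real.sinh ((((q : ℝ) - (p : ℝ)) / 2) * l) * Gq n p q l :=
  Dtil_combination_eq_general l n p q hqp
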